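/- arXiv:0807.2423 — 2 statements merged into one kernel-verified Lean document; each statement's English description precedes it below -/
import Mathlib

section
/- Let 0 < n < L, r ≥ 1, and 1 ≤ i₁ < ⋯ < i_r ≤ L with i_r ≥ n + r. Then for the maximal value j = L − i_r + 1: if r ≥ 2, E_r(L,n;i₁,…,i_r;L−i_r+1) = β^{−(L−i_r+1)} · E_{r−1}(i_r−1, n; i₁,…,i_{r−1}; 1), and if r = 1, E_1(L,n;i₁;L−i₁+1) = β^{−(L−i₁+1)} · Z^{α,β}(i₁−1, n). -/
open scoped BigOperators Classical
open Filter Topology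

noncomputable section

namespace TASEP

/-- The matrix `X₀`: ones on the diagonal and the subdiagonal. -/
def X0 : ℕ → ℕ → ℝ := fun i k => if k = i ∨ k + 1 = i then 1 else 0

/-- The matrix `X₁`: ones on the diagonal and the superdiagonal. -/
def X1 : ℕ → ℕ → ℝ := fun i k => if k = i ∨ k = i + 1 then 1 else 0

/-- The matrix `X₂`: a single one in the `(0,0)` entry. -/
def X2 : ℕ → ℕ → ℝ := fun i k => if i = 0 ∧ k = 0 then 1 else 0

/-- The matrix associated to a species label (`0` = hole, `1` = first class
particle, `2` = second class particle). -/
def Xmat : Fin 3 → ℕ → ℕ → ℝ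
  | 0 => X0
  | 1 => X1
  | 2 => X2

/-- Product of two infinite matrices (well defined here since the relevant
matrices have finitely many nonzero entries in each row and column). -/
def mul (A B : ℕ → ℕ → ℝ) : ℕ → ℕ → ℝ := fun i k => ∑' j, A i j * B j k

/-- The row vector `⟨W_α|`, with `i`-th entry `((1-α)/α)^i`. -/
def W (α : ℝ) : ℕ → ℝ := fun i => ((1 - α) / α) ^ i

/-- The column vector `|V_β⟩`, with `i`-th entry `((1-β)/β)^i`. -/
def V (β : ℝ) : ℕ → ℝ := fun i => ((1 - β) / β) ^ i

/-- Row vector times matrix. -/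
def rowMul (v : ℕ → ℝ) (A : ℕ → ℕ → ℝ) : ℕ → ℝ := fun k => ∑' i, v i * A i k

/-- Matrix times column vector. -/
def colMul (A : ℕ → ℕ → ℝ) (v : ℕ → ℝ) : ℕ → ℝ := fun i => ∑' k, A i k * v k

/-- Row vector times a word of matrices. -/
def rowWord (v : ℕ → ℝ) : List (Fin 3) → ℕ → ℝ
  | [] => v
  | a :: rest => rowWord (rowMul v (Xmat a)) rest

/-- Matrix element `⟨v| X_{σ₁} ⋯ X_{σ_p} |w⟩` of a word of matrices. -/
def pairing (v : ℕ → ℝ) (word : List (Fin 3)) (w : ℕ → ℝ) : ℝ :=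
  ∑' i, rowWord v word i * w i

/-- Weight `w^{α,β}(τ) = ⟨W_α| X_{τ₁} ⋯ X_{τ_L} |V_β⟩` of a configuration. -/
def wt (α β : ℝ) {L : ℕ} (τ : Fin L → Fin 3) : ℝ :=
  pairing (W α) (List.ofFn τ) (V β)

/-- Number of second class particles in a configuration. -/
def numTwos {L : ℕ} (τ : Fin L → Fin 3) : ℕ :=
  (Finset.univ.filter fun i => τ i = 2).card

/-- `Y L n`: configurations of length `L` with exactly `n` second class particles. -/
def Y (L n : ℕ) : Finset (Fin L → Fin 3) :=
  Finset.univ.filter fun τ => numTwos τ = n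

/-- The partition function `Z^{α,β}(L,n)`. -/
def Z (α β : ℝ) (L n : ℕ) : ℝ := ∑ τ ∈ Y L n, wt α β τ

/-- Value of a configuration at the 1-based site `s` (defaulting to `0` off the lattice). -/
def val {L : ℕ} (τ : Fin L → Fin 3) (s : ℕ) : Fin 3 :=
  if h : 1 ≤ s ∧ s ≤ L then τ ⟨s - 1, by omega⟩ else 0

/-- `E α β L n r sites j` is `E_r(L,n;i₁,…,i_r;j)`: the sum of weights of
configurations in `Y L n` with a first class particle at each of the sites
`i₁,…,i_{r-1}` and a block of `j` consecutive first class particles starting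
at site `i_r`. -/
def E (α β : ℝ) (L n r : ℕ) (sites : Fin r → ℕ) (j : ℕ) : ℝ :=
  ∑ τ ∈ (Y L n).filter (fun τ =>
      (∀ m : Fin r, (m : ℕ) + 1 ≠ r → val τ (sites m) = 1) ∧
      (∀ m : Fin r, (m : ℕ) + 1 = r → ∀ t ∈ Finset.range j, val τ (sites m + t) = 1)),
    wt α β τ

end TASEP

/-!
On the sites `i_r, …, L` every configuration counted by `E` carries first class particles, so it
is `σ ++ 1^j` with `σ` a configuration of the first `i_r - 1` sites. Because `σ` contains a second
class particle and `X₂ = |0⟩⟨0|`, the row vector `⟨W_α| X_σ` is finitely supported; the remaining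
product can then be reassociated, and `X₁ |V_β⟩ = β⁻¹ |V_β⟩` gives `w(σ ++ 1^j) = β^{-j} w(σ)`.
-/

namespace TASEP

def VanishesFrom (u : ℕ → ℝ) (N : ℕ) : Prop := ∀ i, N ≤ i → u i = 0

lemma VanishesFrom.tsum_mul_eq_sum {u : ℕ → ℝ} {N : ℕ} (hu : VanishesFrom u N) (v : ℕ → ℝ) :
    ∑' i, u i * v i = ∑ i ∈ Finset.range N, u i * v i :=
  tsum_eq_sum fun i hi => by rw [hu i (by simpa using hi), zero_mul]

lemma rowMul_apply_eq_zero {u : ℕ → ℝ} {A : ℕ → ℕ → ℝ} {k : ℕ} (h : ∀ i, u i = 0 ∨ A i k = 0) :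
    rowMul u A k = 0 :=
  (tsum_congr fun i => by rcases h i with h | h <;> simp [h]).trans tsum_zero

lemma Xmat_eq_zero_of_add_one_lt (a : Fin 3) {i k : ℕ} (h : i + 1 < k) : Xmat a i k = 0 := by
  fin_cases a <;> simp [Xmat, X0, X1, X2] <;> omega

lemma vanishesFrom_rowMul_Xmat {u : ℕ → ℝ} {N : ℕ} (hu : VanishesFrom u N) (a : Fin 3) :
    VanishesFrom (rowMul u (Xmat a)) (N + 1) := fun _ hk =>
  rowMul_apply_eq_zero fun i =>
    (le_or_gt N i).imp (hu i) fun hi => Xmat_eq_zero_of_add_one_lt a (by omega)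

lemma vanishesFrom_rowMul_X2 (u : ℕ → ℝ) : VanishesFrom (rowMul u X2) 1 := fun _ hk =>
  rowMul_apply_eq_zero fun _ => Or.inr (by simp [X2]; omega)

lemma vanishesFrom_rowWord {u : ℕ → ℝ} {N : ℕ} (hu : VanishesFrom u N) (w : List (Fin 3)) :
    VanishesFrom (rowWord u w) (N + w.length) := by
  induction w generalizing u N with
  | nil => simpa [rowWord] using hu
  | cons a w ih =>
    simpa [rowWord, add_assoc, add_comm 1] using ih (vanishesFrom_rowMul_Xmat hu a)

lemma exists_vanishesFrom_rowWord {w : List (Fin 3)} (hw : 2 ∈ w) (v : ℕ → ℝ) :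
    ∃ N, VanishesFrom (rowWord v w) N := by
  induction w generalizing v with
  | nil => simp at hw
  | cons a w ih =>
    rcases List.mem_cons.mp hw with rfl | hw
    · exact ⟨_, vanishesFrom_rowWord (vanishesFrom_rowMul_X2 v) w⟩
    · exact ih hw _

lemma rowWord_append (v : ℕ → ℝ) (w₁ w₂ : List (Fin 3)) :
    rowWord v (w₁ ++ w₂) = rowWord (rowWord v w₁) w₂ := by
  induction w₁ generalizing v with
  | nil => rfl
  | cons a w₁ ih => exact ih _

lemma rowMul_X1_zero (u : ℕ → ℝ) : rowMul u X1 0 = u 0 := by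
  rw [rowMul, tsum_eq_single 0 fun i hi => by simp [X1]; omega]
  simp [X1]

lemma rowMul_X1_succ (u : ℕ → ℝ) (k : ℕ) : rowMul u X1 (k + 1) = u (k + 1) + u k := by
  have hsupp : ∀ i ∉ ({k + 1, k} : Finset ℕ), u i * X1 i (k + 1) = 0 := fun i hi => by
    simp only [Finset.mem_insert, Finset.mem_singleton, not_or] at hi
    simp [X1]
    omega
  rw [rowMul, tsum_eq_sum hsupp, Finset.sum_pair (by omega)]
  simp [X1]

lemma VanishesFrom.tsum_rowMul_X1_mul {u : ℕ → ℝ} {N : ℕ} (hu : VanishesFrom u N)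
    (v : ℕ → ℝ) : ∑' i, rowMul u X1 i * v i = ∑' i, u i * (v i + v (i + 1)) := by
  have hshift := Finset.sum_range_succ' (fun i => u i * v i) N
  rw [Finset.sum_range_succ, hu N le_rfl, zero_mul, add_zero] at hshift
  rw [VanishesFrom.tsum_mul_eq_sum (u := rowMul u X1) (vanishesFrom_rowMul_Xmat hu 1),
    hu.tsum_mul_eq_sum, Finset.sum_range_succ']
  simp only [rowMul_X1_succ, rowMul_X1_zero, mul_add, add_mul, Finset.sum_add_distrib]
  linarith

lemma V_add_V_succ {β : ℝ} (hβ : β ≠ 0) (i : ℕ) : V β i + V β (i + 1) = β⁻¹ * V β i := by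
  simp only [V, pow_succ]
  field_simp
  ring

lemma VanishesFrom.tsum_rowWord_replicate_one_mul_V {β : ℝ} (hβ : β ≠ 0) (j : ℕ)
    {u : ℕ → ℝ} {N : ℕ} (hu : VanishesFrom u N) :
    ∑' i, rowWord u (List.replicate j 1) i * V β i = β⁻¹ ^ j * ∑' i, u i * V β i := by
  induction j generalizing u N with
  | zero => simp [rowWord]
  | succ j ih =>
    rw [List.replicate_succ, rowWord, ih (vanishesFrom_rowMul_Xmat hu 1)]
    change β⁻¹ ^ j * ∑' i, rowMul u X1 i * V β i = _
    simp only [hu.tsum_rowMul_X1_mul, V_add_V_succ hβ, mul_left_comm (u _), tsum_mul_left,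
      pow_succ, mul_assoc]

lemma pairing_append_replicate_one {w : List (Fin 3)} (hw : 2 ∈ w) (v : ℕ → ℝ) {β : ℝ}
    (hβ : β ≠ 0) (j : ℕ) :
    pairing v (w ++ List.replicate j 1) (V β) = β⁻¹ ^ j * pairing v w (V β) := by
  obtain ⟨N, hN⟩ := exists_vanishesFrom_rowWord hw v
  rw [pairing, pairing, rowWord_append, hN.tsum_rowWord_replicate_one_mul_V hβ]

lemma numTwos_append {p j : ℕ} (σ : Fin p → Fin 3) (ρ : Fin j → Fin 3) :
    numTwos (Fin.append σ ρ) = numTwos σ + numTwos ρ := by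
  simp only [numTwos, Finset.card_filter, Fin.sum_univ_add, Fin.append_left, Fin.append_right]

lemma numTwos_const_one (j : ℕ) : numTwos (fun _ : Fin j => (1 : Fin 3)) = 0 := by
  simp [numTwos]

lemma wt_append_const_one (α : ℝ) {β : ℝ} (hβ : β ≠ 0) {p : ℕ} {σ : Fin p → Fin 3}
    (hσ : numTwos σ ≠ 0) (j : ℕ) :
    wt α β (Fin.append σ fun _ : Fin j => 1) = β⁻¹ ^ j * wt α β σ := by
  obtain ⟨k, hk⟩ := Finset.card_ne_zero.mp hσ
  have h2 : (2 : Fin 3) ∈ List.ofFn σ := List.mem_ofFn.mpr ⟨k, (Finset.mem_filter.mp hk).2⟩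
  rw [wt, wt, List.ofFn_fin_append, List.ofFn_const, pairing_append_replicate_one h2 _ hβ]

lemma val_append_of_le {p j : ℕ} (σ : Fin p → Fin 3) (ρ : Fin j → Fin 3) {s : ℕ} (hs : s ≤ p) :
    val (Fin.append σ ρ) s = val σ s := by
  by_cases h : 1 ≤ s
  · rw [val, val, dif_pos ⟨h, by omega⟩, dif_pos ⟨h, hs⟩]
    exact Fin.append_left σ ρ ⟨s - 1, by omega⟩
  · simp [val, h]

lemma val_add_one_add {p j : ℕ} (τ : Fin (p + j) → Fin 3) (t : Fin j) :
    val τ (p + 1 + t) = τ (Fin.natAdd p t) := by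
  rw [val, dif_pos ⟨by omega, by omega⟩]
  congr 1
  ext
  simp only [Fin.natAdd]
  omega

lemma forall_fin_add_one_ne_iff {r : ℕ} {P : Fin r → Prop} :
    (∀ m : Fin r, (m : ℕ) + 1 ≠ r → P m) ↔
      ∀ m : Fin (r - 1), P ⟨m, m.isLt.trans_le (Nat.sub_le r 1)⟩ :=
  ⟨fun h m => h _ (by have := m.isLt; simp only; omega), fun h m hm => h ⟨m, by omega⟩⟩

lemma forall_fin_add_one_eq_iff {r : ℕ} (hr : 0 < r) {P : Fin r → Prop} :
    (∀ m : Fin r, (m : ℕ) + 1 = r → P m) ↔ P ⟨r - 1, by omega⟩ := by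
  refine ⟨fun h => h _ (by simp only; omega), fun h ⟨m, _⟩ hm => ?_⟩
  obtain rfl : m = r - 1 := by simp only at hm; omega
  exact h

def appendOnes (p j : ℕ) : (Fin p → Fin 3) ↪ (Fin (p + j) → Fin 3) where
  toFun σ := Fin.append σ fun _ => 1
  inj' σ σ' h := funext fun k => by simpa using congrFun h (Fin.castAdd j k)

@[simp]
lemma appendOnes_apply {p j : ℕ} (σ : Fin p → Fin 3) :
    appendOnes p j σ = Fin.append σ fun _ => 1 :=
  rfl

lemma E_eq_sum_filter_tail (α β : ℝ) {p j n r : ℕ} (hr : 0 < r) {sites : Fin r → ℕ}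
    (hlast : sites ⟨r - 1, by omega⟩ = p + 1) :
    E α β (p + j) n r sites j = ∑ τ ∈ (Y (p + j) n).filter (fun τ =>
      (∀ m : Fin (r - 1), val τ (sites ⟨m, m.isLt.trans_le (Nat.sub_le r 1)⟩) = 1) ∧
        ∀ t : Fin j, τ (Fin.natAdd p t) = 1), wt α β τ := by
  rw [E]
  refine Finset.sum_congr (Finset.filter_congr fun τ _ => ?_) fun _ _ => rfl
  rw [forall_fin_add_one_ne_iff, forall_fin_add_one_eq_iff hr, hlast]
  refine and_congr_right fun _ => ⟨fun h t => ?_, fun h t ht => ?_⟩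
  · exact (val_add_one_add τ t).symm.trans (h t (by simp))
  · rw [val_add_one_add τ ⟨t, by simpa using ht⟩, h]

lemma filter_tail_eq_map_appendOnes {p j n k : ℕ} (s : Fin k → ℕ) (hs : ∀ m, s m ≤ p) :
    (Y (p + j) n).filter (fun τ => (∀ m, val τ (s m) = 1) ∧ ∀ t : Fin j, τ (Fin.natAdd p t) = 1)
      = ((Y p n).filter fun σ => ∀ m, val σ (s m) = 1).map (appendOnes p j) := by
  ext τ
  simp only [Finset.mem_map, Finset.mem_filter, Y, Finset.mem_univ, true_and,
    appendOnes_apply]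
  constructor
  · rintro ⟨hn, hval, htail⟩
    have hτ : Fin.append (fun k => τ (Fin.castAdd j k)) (fun _ => 1) = τ := by
      conv_rhs => rw [← Fin.append_castAdd_natAdd (f := τ)]
      simp only [htail]
    refine ⟨_, ⟨?_, fun m => ?_⟩, hτ⟩
    · rwa [← hτ, numTwos_append, numTwos_const_one, add_zero] at hn
    · rw [← val_append_of_le _ (fun _ : Fin j => (1 : Fin 3)) (hs m), hτ]
      exact hval m
  · rintro ⟨σ, ⟨hn, hval⟩, rfl⟩
    refine ⟨by rw [numTwos_append, numTwos_const_one, add_zero, hn], fun m => ?_,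
      Fin.append_right _ _⟩
    rw [val_append_of_le _ _ (hs m)]
    exact hval m

lemma E_one (α β : ℝ) (L n r : ℕ) (sites : Fin r → ℕ) :
    E α β L n r sites 1 =
      ∑ τ ∈ (Y L n).filter (fun τ => ∀ m, val τ (sites m) = 1), wt α β τ := by
  rw [E]
  refine Finset.sum_congr (Finset.filter_congr fun τ _ => ?_) fun _ _ => rfl
  simp only [Finset.range_one, Finset.mem_singleton, forall_eq, add_zero, ← forall_and]
  exact forall_congr' fun m => by tauto

lemma E_eq_inv_pow_mul_sum_filter (α : ℝ) {β : ℝ} (hβ : β ≠ 0) {p j n r : ℕ} (hn : 0 < n)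
    (hr : 0 < r) {sites : Fin r → ℕ} (hlast : sites ⟨r - 1, by omega⟩ = p + 1)
    (hinit : ∀ m : Fin (r - 1), sites ⟨m, m.isLt.trans_le (Nat.sub_le r 1)⟩ ≤ p) :
    E α β (p + j) n r sites j = β⁻¹ ^ j * ∑ σ ∈ (Y p n).filter (fun σ =>
      ∀ m : Fin (r - 1), val σ (sites ⟨m, m.isLt.trans_le (Nat.sub_le r 1)⟩) = 1), wt α β σ := by
  rw [E_eq_sum_filter_tail α β hr hlast, filter_tail_eq_map_appendOnes _ hinit, Finset.sum_map,
    Finset.mul_sum]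
  refine Finset.sum_congr rfl fun σ hσ => ?_
  have hσn : numTwos σ = n := (Finset.mem_filter.mp (Finset.mem_filter.mp hσ).1).2
  exact wt_append_const_one α hβ (by omega) j

/-- boundary condition, Case 1: if `i_r ≥ n + r` then for the
maximal value `j = L − i_r + 1`:
for `r ≥ 2`, `E_r(L,n;i₁,…,i_r;L−i_r+1) = β^{−(L−i_r+1)} E_{r−1}(i_r−1,n;i₁,…,i_{r−1};1)`,
and for `r = 1`, `E_1(L,n;i₁;L−i₁+1) = β^{−(L−i₁+1)} Z^{α,β}(i₁−1,n)`. -/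
theorem E_max_j_case1 (α β : ℝ)
    (hβ : β ∈ Set.Ioc (0 : ℝ) 1)
    (L n r : ℕ) (sites : Fin r → ℕ)
    (h0n : 0 < n) (hr : 1 ≤ r)
    (hmono : StrictMono sites)
    (hfirst : 1 ≤ sites ⟨0, by omega⟩)
    (hlastL : sites ⟨r - 1, by omega⟩ ≤ L) :
    (2 ≤ r →
      E α β L n r sites (L - sites ⟨r - 1, by omega⟩ + 1)
        = (β ^ (L - sites ⟨r - 1, by omega⟩ + 1))⁻¹ *
          E α β (sites ⟨r - 1, by omega⟩ - 1) n (r - 1)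
            (fun m : Fin (r - 1) => sites ⟨(m : ℕ), by have := m.isLt; omega⟩) 1) ∧
    (r = 1 →
      E α β L n r sites (L - sites ⟨r - 1, by omega⟩ + 1)
        = (β ^ (L - sites ⟨r - 1, by omega⟩ + 1))⁻¹ *
          Z α β (sites ⟨r - 1, by omega⟩ - 1) n) := by
  have hlast : 1 ≤ sites ⟨r - 1, by omega⟩ :=
    hfirst.trans (hmono.monotone (Fin.mk_le_mk.mpr (Nat.zero_le _)))
  obtain ⟨p, hp⟩ : ∃ p, sites ⟨r - 1, by omega⟩ = p + 1 := ⟨_, (Nat.sub_add_cancel hlast).symm⟩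
  obtain ⟨j, rfl⟩ : ∃ j, L = p + j := ⟨L - p, by omega⟩
  have hinit : ∀ m : Fin (r - 1), sites ⟨m, m.isLt.trans_le (Nat.sub_le r 1)⟩ ≤ p := fun m => by
    have := hmono (show (⟨m, m.isLt.trans_le (Nat.sub_le r 1)⟩ : Fin r) < ⟨r - 1, by omega⟩
      from Fin.mk_lt_mk.mpr m.isLt)
    rw [hp] at this
    omega
  have key := E_eq_inv_pow_mul_sum_filter α hβ.1.ne' (j := j) h0n hr hp hinit
  rw [hp, Nat.add_sub_cancel, show p + j - (p + 1) + 1 = j by omega, ← inv_pow]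
  refine ⟨fun _ => by rw [key, E_one], fun hr1 => ?_⟩
  subst hr1
  rw [key, Z, Finset.filter_true_of_mem fun σ _ m => m.elim0]
end TASEP
end
end

section
/- (Normalization of the boundary gap distribution) Let β ∈ (0,1] and let u ≥ 0 satisfy u < β(1−β) if β ≤ 1/2 and u ≤ 1/4 if β > 1/2. Then the series Σ_{l=0}^∞ u^l Z^{1,β}(l, 0) converges and equals 2β/(β(1+√(1−4u)) − 2u); equivalently, p^{u,β}(l) = ((β(1+√(1−4u)) − 2u)/(2β)) · u^l Z^{1,β}(l,0), l = 0,1,2,…, is a probability distribution on the nonnegative integers. -/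
open scoped BigOperators Classical
open Filter Topology

noncomputable section

/-!
Write `⟨W₁|(X₀ + X₁)^L = Σ_k g_L(k) ⟨e_k|` and `γ = (1 - β)/β`, so that the series is the double
series `Σ_L Σ_k u^L g_L(k) γ^k` of nonnegative terms. Summed over `L` first, the columns
`G_k = Σ_L u^L g_L(k)` form the only bounded nonnegative solution of `G = e₀ + u G(X₀ + X₁)`,
namely `G_k = x^k / (1 - c)^2` with `x = c/(1 - c)`, where `c = (1 - √(1 - 4u))/2` is the root of
`c(1 - c) = u` in `[0, 1/2]`. What remains is a geometric series in `xγ`, and `xγ < 1` is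
equivalent to `c < β`: this is where the constraint on `u` comes from.
-/

namespace TASEP

open Finset

lemma rowMul_eq_sum {v : ℕ → ℝ} {A : ℕ → ℕ → ℝ} {k : ℕ} (s : Finset ℕ)
    (hs : ∀ i ∉ s, A i k = 0) : rowMul v A k = ∑ i ∈ s, v i * A i k :=
  tsum_eq_sum fun i hi => by rw [hs i hi, mul_zero]

lemma rowMul_X0 (v : ℕ → ℝ) (k : ℕ) : rowMul v X0 k = v k + v (k + 1) := by
  rw [rowMul_eq_sum {k, k + 1} fun i hi =>
    if_neg (by simp only [mem_insert, mem_singleton] at hi; omega)]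
  simp [X0]

lemma rowMul_X1 (v : ℕ → ℝ) (k : ℕ) :
    rowMul v X1 k = v k + if k = 0 then 0 else v (k - 1) := by
  rcases k with _ | k
  · rw [rowMul_eq_sum {0} fun i hi => if_neg (by simp only [mem_singleton] at hi; omega)]
    simp [X1]
  · rw [rowMul_eq_sum {k + 1, k} fun i hi =>
      if_neg (by simp only [mem_insert, mem_singleton] at hi; omega)]
    simp [X1]

lemma rowMul_X2 (v : ℕ → ℝ) (k : ℕ) : rowMul v X2 k = if k = 0 then v 0 else 0 := by
  rw [rowMul_eq_sum {0} fun i hi => if_neg (by simp only [mem_singleton] at hi; omega)]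
  simp [X2]

/-- The right action `⟨v| ↦ ⟨v|(X₀ + X₁)` on row vectors. -/
def transfer : (ℕ → ℝ) →L[ℝ] (ℕ → ℝ) where
  toFun v k := v (k + 1) + 2 * v k + if k = 0 then 0 else v (k - 1)
  map_add' v w := by ext k; simp only [Pi.add_apply]; split_ifs <;> ring
  map_smul' a v := by
    ext k; simp only [Pi.smul_apply, smul_eq_mul, RingHom.id_apply]; split_ifs <;> ring
  cont := continuous_pi fun k => by split_ifs <;> fun_prop

lemma transfer_apply (v : ℕ → ℝ) (k : ℕ) :
    transfer v k = v (k + 1) + 2 * v k + if k = 0 then 0 else v (k - 1) := rfl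

lemma rowMul_X0_add_rowMul_X1 (v : ℕ → ℝ) : rowMul v X0 + rowMul v X1 = transfer v := by
  ext k
  rw [Pi.add_apply, rowMul_X0, rowMul_X1, transfer_apply]
  ring

lemma transfer_nonneg {v : ℕ → ℝ} (hv : 0 ≤ v) : 0 ≤ transfer v := fun k => by
  have hv' (j : ℕ) : 0 ≤ v j := hv j
  rw [Pi.zero_apply, transfer_apply]
  split_ifs <;> linarith [hv' k, hv' (k + 1), hv' (k - 1)]

lemma transfer_mono {v w : ℕ → ℝ} (h : v ≤ w) : transfer v ≤ transfer w := by
  simpa [map_sub] using transfer_nonneg (sub_nonneg.2 h)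

lemma rowWord_eq_zero_of_le (w : List (Fin 3)) {v : ℕ → ℝ} {n : ℕ} (hv : ∀ i, n ≤ i → v i = 0)
    {i : ℕ} (hi : n + w.length ≤ i) : rowWord v w i = 0 := by
  induction w generalizing v n with
  | nil => exact hv i hi
  | cons a w ih =>
    refine ih (n := n + 1) (fun j hj => ?_) (by simp only [List.length_cons] at hi; omega)
    fin_cases a
    · simp [Xmat, rowMul_X0, hv j (by omega), hv (j + 1) (by omega)]
    · simp [Xmat, rowMul_X1, hv j (by omega), hv (j - 1) (by omega)]
    · simp [Xmat, rowMul_X2, show j ≠ 0 by omega]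

lemma Y_zero_eq_piFinset (L : ℕ) : Y L 0 = Fintype.piFinset fun _ => {0, 1} := by
  ext τ
  simp only [Y, numTwos, mem_filter, mem_univ, true_and, card_eq_zero, filter_eq_empty_iff,
    Fintype.mem_piFinset, mem_insert, mem_singleton]
  exact forall_congr' fun i => by generalize τ i = a; fin_cases a <;> simp

lemma sum_piFinset_const_succ {α M : Type*} [AddCommMonoid M] {n : ℕ}
    (s : Finset α) (f : (Fin (n + 1) → α) → M) :
    ∑ r ∈ Fintype.piFinset (fun _ => s), f r
      = ∑ a ∈ s, ∑ r ∈ Fintype.piFinset (fun _ => s), f (Fin.cons a r) := by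
  have h := filter_piFinset_eq_map_consEquiv (fun _ : Fin (n + 1) => s) fun _ => True
  simp only [filter_true] at h
  rw [h, sum_map, sum_product]
  rfl

lemma sum_rowWord_Y_zero (L : ℕ) (v : ℕ → ℝ) :
    ∑ τ ∈ Y L 0, rowWord v (List.ofFn τ) = (transfer ^ L) v := by
  induction L generalizing v with
  | zero => simp [Y_zero_eq_piFinset, rowWord]
  | succ L ih =>
    rw [Y_zero_eq_piFinset, sum_piFinset_const_succ, ← Y_zero_eq_piFinset]
    simp only [List.ofFn_cons, rowWord, ih]
    rw [sum_pair (by decide), ← map_add]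
    exact congrArg (transfer ^ L) (rowMul_X0_add_rowMul_X1 v)

/-- The row vector `⟨W₁|(X₀ + X₁)^L`. -/
def rowPower (L : ℕ) : ℕ → ℝ := (transfer ^ L) (Pi.single 0 1)

lemma W_one : W 1 = Pi.single 0 1 := by
  ext i
  rcases i with _ | i <;> simp [W]

lemma rowPower_zero : rowPower 0 = Pi.single 0 1 := rfl

lemma rowPower_succ (L : ℕ) : rowPower (L + 1) = transfer (rowPower L) := by
  rw [rowPower, pow_succ']
  rfl

lemma rowPower_nonneg (L : ℕ) : 0 ≤ rowPower L := by
  induction L with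
  | zero => exact Pi.single_nonneg.2 zero_le_one
  | succ L ih => exact rowPower_succ L ▸ transfer_nonneg ih

lemma rowWord_W_one_eq_zero {τ : List (Fin 3)} {i : ℕ} (hi : τ.length < i) :
    rowWord (W 1) τ i = 0 :=
  rowWord_eq_zero_of_le τ (n := 1)
    (fun j hj => by rw [W_one]; exact Pi.single_eq_of_ne (by omega) 1) (by omega)

lemma Z_one_eq_tsum (β : ℝ) (L : ℕ) : Z 1 β L 0 = ∑' k, rowPower L k * V β k := by
  have hfin (τ : Fin L → Fin 3) : Summable fun k => rowWord (W 1) (List.ofFn τ) k * V β k :=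
    summable_of_ne_finset_zero (s := range (L + 1)) fun k hk => by
      have : (List.ofFn τ).length < k := by
        simp only [mem_range, List.length_ofFn] at hk ⊢; omega
      rw [rowWord_W_one_eq_zero this, zero_mul]
  simp only [Z, wt, pairing]
  rw [← Summable.tsum_finsetSum fun τ _ => hfin τ]
  simp only [← sum_mul, ← Finset.sum_apply, W_one, sum_rowWord_Y_zero, rowPower]

def colGen (c : ℝ) (k : ℕ) : ℝ := (c / (1 - c)) ^ k / (1 - c) ^ 2

lemma colGen_eq_single_add_smul_transfer {c : ℝ} (hc : c ≠ 1) :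
    colGen c = Pi.single 0 1 + (c * (1 - c)) • transfer (colGen c) := by
  have hc' : 1 - c ≠ 0 := sub_ne_zero.2 (Ne.symm hc)
  ext k
  simp only [colGen, Pi.add_apply, Pi.smul_apply, smul_eq_mul, transfer_apply, Pi.single_apply]
  rcases k with _ | k
  · simp only [if_true, zero_add, pow_zero, pow_one]
    field_simp
    ring
  · simp only [Nat.succ_ne_zero, if_false, Nat.add_sub_cancel, pow_succ]
    field_simp
    ring

lemma colGen_nonneg {c : ℝ} (hc0 : 0 ≤ c) (hc1 : c < 1) : 0 ≤ colGen c := fun k => by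
  have : 0 < 1 - c := by linarith
  simp only [colGen, Pi.zero_apply]
  positivity

lemma colGen_le {c : ℝ} (hc0 : 0 ≤ c) (hc2 : c ≤ 1 / 2) (k : ℕ) :
    colGen c k ≤ 1 / (1 - c) ^ 2 := by
  have h1 : 0 < 1 - c := by linarith
  rw [colGen]
  gcongr
  exact pow_le_one₀ (by positivity) ((div_le_one h1).2 (by linarith))

lemma antitone_of_bddAbove_of_monotone_sub {d : ℕ → ℝ} (hd : BddAbove (Set.range d))
    (hconv : Monotone fun k => d (k + 1) - d k) : Antitone d := by
  refine antitone_nat_of_succ_le fun j => not_lt.1 fun hj => ?_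
  obtain ⟨M, hM⟩ := hd
  have growth (n : ℕ) : d j + n * (d (j + 1) - d j) ≤ d (j + n) := by
    induction n with
    | zero => simp
    | succ n ih =>
      have := hconv (Nat.le_add_right j n)
      push_cast
      simp only [← add_assoc] at this ⊢
      linarith
  obtain ⟨n, hn⟩ := exists_nat_gt ((M - d j) / (d (j + 1) - d j))
  have := (div_lt_iff₀ (sub_pos.2 hj)).1 hn
  linarith [growth n, hM (Set.mem_range_self (j + n))]

/-- Away from the boundary the equation makes `d` convex, hence nonincreasing as it is bounded;
the boundary row `(1 - 2u) d₀ = u d₁` then forces `d₀ = 0`. -/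
lemma eq_zero_of_eq_smul_transfer {u : ℝ} (hu0 : 0 ≤ u) (hu : u ≤ 1 / 4) {d : ℕ → ℝ}
    (hd0 : 0 ≤ d) (hdM : BddAbove (Set.range d)) (hd : d = u • transfer d) : d = 0 := by
  have hrow (k : ℕ) : d k = u * transfer d k := congrFun hd k
  rcases hu0.eq_or_lt with rfl | hu_pos
  · simpa using hd
  have hconv : Monotone fun k => d (k + 1) - d k := monotone_nat_of_le_succ fun k => by
    have h := hrow (k + 1)
    simp only [transfer_apply, Nat.add_sub_cancel, if_neg (Nat.succ_ne_zero k)] at h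
    have : u * (d (k + 1) - d k) ≤ u * (d (k + 1 + 1) - d (k + 1)) := by
      linarith [mul_nonneg (by linarith : (0 : ℝ) ≤ 1 - 4 * u) (hd0 (k + 1) : 0 ≤ d (k + 1))]
    exact le_of_mul_le_mul_left this hu_pos
  have hanti := antitone_of_bddAbove_of_monotone_sub hdM hconv
  have hd00 : d 0 = 0 := by
    have h := hrow 0
    simp only [transfer_apply, zero_add, if_true] at h
    have h0 : 0 ≤ d 0 := hd0 0
    linarith [mul_le_mul_of_nonneg_left (hanti (Nat.zero_le 1)) hu0,
      mul_le_mul_of_nonneg_right hu h0]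
  funext k
  exact le_antisymm (by simpa [hd00] using hanti (Nat.zero_le k)) (hd0 k)

/-- The partial sums `S_N` obey `S_{N+1} = e₀ + u ⟨S_N|(X₀ + X₁)`; since `colGen c` is a fixed
point of this monotone map, they stay below it, so the columns converge. The limit is another
fixed point, and the difference of the two is killed by `eq_zero_of_eq_smul_transfer`. -/
lemma hasSum_rowPower {c : ℝ} (hc0 : 0 ≤ c) (hc2 : c ≤ 1 / 2) :
    HasSum (fun L => (c * (1 - c)) ^ L • rowPower L) (colGen c) := by
  set u := c * (1 - c)
  have hu0 : 0 ≤ u := mul_nonneg hc0 (by linarith)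
  have hfix := colGen_eq_single_add_smul_transfer (c := c) (by linarith)
  have hterm (L : ℕ) : 0 ≤ u ^ L • rowPower L := smul_nonneg (by positivity) (rowPower_nonneg L)
  have hpartial (N : ℕ) :
      ∑ L ∈ range (N + 1), u ^ L • rowPower L
        = Pi.single 0 1 + u • transfer (∑ L ∈ range N, u ^ L • rowPower L) := by
    simp only [sum_range_succ', map_sum, map_smul, smul_sum, smul_smul, rowPower_succ, pow_succ',
      pow_zero, one_smul, rowPower_zero, add_comm]
  have hle (N : ℕ) : ∑ L ∈ range N, u ^ L • rowPower L ≤ colGen c := by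
    induction N with
    | zero => simpa using colGen_nonneg hc0 (by linarith)
    | succ N ih =>
      rw [hpartial, hfix]
      exact add_le_add_right (smul_le_smul_of_nonneg_left (transfer_mono ih) hu0) _
  obtain ⟨G, hG⟩ : Summable fun L => u ^ L • rowPower L :=
    Pi.summable.2 fun k => summable_of_sum_range_le (fun L => hterm L k)
      fun N => by simpa only [Finset.sum_apply] using hle N k
  have hGfix : G = Pi.single 0 1 + u • transfer G := by
    have hshift := (hasSum_nat_add_iff' 1).2 hG
    have hstep : HasSum (fun L => u ^ (L + 1) • rowPower (L + 1)) (u • transfer G) := by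
      simpa only [rowPower_succ, pow_succ', mul_smul, map_smul] using
        (transfer.hasSum hG).const_smul u
    rw [← hshift.unique hstep]
    simp [rowPower_zero]
  have hGle : G ≤ colGen c := le_of_tendsto' hG.tendsto_sum_nat hle
  have hdiff : colGen c - G = 0 := by
    refine eq_zero_of_eq_smul_transfer hu0 (by nlinarith) (sub_nonneg.2 hGle) ?_ ?_
    · refine ⟨1 / (1 - c) ^ 2, Set.forall_mem_range.2 fun k => ?_⟩
      have : 0 ≤ G k := hG.nonneg hterm k
      show colGen c k - G k ≤ _
      linarith [colGen_le hc0 hc2 k, hGle k]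
    · conv_lhs => rw [hfix, hGfix]
      rw [map_sub, smul_sub, add_sub_add_left_eq_sub]
  rwa [← sub_eq_zero.1 hdiff] at hG

lemma hasSum_tsum_of_nonneg_of_hasSum {β γ : Type*} {F : β → γ → ℝ} (hF : ∀ b c, 0 ≤ F b c)
    {a : γ → ℝ} (hcol : ∀ c, HasSum (fun b => F b c) (a c)) {s : ℝ} (ha : HasSum a s) :
    HasSum (fun b => ∑' c, F b c) s := by
  set f : γ × β → ℝ := fun p => F p.2 p.1
  have hf : Summable f := (summable_prod_of_nonneg fun p => hF p.2 p.1).2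
    ⟨fun c => (hcol c).summable, by simpa only [f, (hcol _).tsum_eq] using ha.summable⟩
  have hfs : HasSum f s := (hf.hasSum.prod_fiberwise hcol).unique ha ▸ hf.hasSum
  have hswap : HasSum (fun p : β × γ => F p.1 p.2) s :=
    (Equiv.prodComm β γ).hasSum_iff.2 hfs
  exact hswap.prod_fiberwise fun b => (hswap.summable.prod_factor b).hasSum

lemma hasSum_Z_one {β c : ℝ} (hβ0 : 0 < β) (hβ1 : β ≤ 1) (hc0 : 0 ≤ c) (hc2 : c ≤ 1 / 2)
    (hcβ : c < β) :
    HasSum (fun L => (c * (1 - c)) ^ L * Z 1 β L 0) (β / ((1 - c) * (β - c))) := by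
  set γ := (1 - β) / β
  have h1c : 0 < 1 - c := by linarith
  have hβc : β - c ≠ 0 := by linarith
  have hq0 : 0 ≤ c / (1 - c) * γ := by positivity
  have hq1 : c / (1 - c) * γ < 1 := by
    rw [div_mul_div_comm, div_lt_one (by positivity)]
    nlinarith
  have hgeom : HasSum (fun k => colGen c k * γ ^ k) (β / ((1 - c) * (β - c))) := by
    have hterm : (fun k => colGen c k * γ ^ k) = fun k => (c / (1 - c) * γ) ^ k / (1 - c) ^ 2 :=
      funext fun k => by rw [colGen, mul_pow]; ring
    have hsum : β / ((1 - c) * (β - c)) = (1 - c / (1 - c) * γ)⁻¹ / (1 - c) ^ 2 := by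
      have : 1 - c / (1 - c) * γ = (β - c) / (β * (1 - c)) := by
        simp only [γ]
        field_simp
        ring
      rw [this, inv_div]
      field_simp
    rw [hterm, hsum]
    exact (hasSum_geometric_of_lt_one hq0 hq1).div_const _
  have hcol (k : ℕ) : HasSum (fun L => (c * (1 - c)) ^ L * (rowPower L k * γ ^ k))
      (colGen c k * γ ^ k) := by
    simpa only [Pi.smul_apply, smul_eq_mul, mul_assoc] using
      (Pi.hasSum.1 (hasSum_rowPower hc0 hc2) k).mul_right (γ ^ k)
  have hterm (L k : ℕ) : 0 ≤ (c * (1 - c)) ^ L * (rowPower L k * γ ^ k) :=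
    mul_nonneg (by positivity) (mul_nonneg (rowPower_nonneg L k) (by positivity))
  convert hasSum_tsum_of_nonneg_of_hasSum hterm hcol hgeom using 2 with L
  rw [tsum_mul_left, Z_one_eq_tsum]
  rfl

/-- normalization of the boundary gap distribution: for
`β ∈ (0,1]` and admissible `u ≥ 0`, the series `Σ_{l=0}^∞ uˡ Z^{1,β}(l,0)`
converges and equals `2β/(β(1+√(1−4u)) − 2u)`. -/
theorem boundary_gap_normalization (β u : ℝ)
    (hβ : β ∈ Set.Ioc (0 : ℝ) 1) (hu : 0 ≤ u)
    (hsmall : β ≤ 1 / 2 → u < β * (1 - β))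
    (hlarge : 1 / 2 < β → u ≤ 1 / 4) :
    Summable (fun l : ℕ => u ^ l * Z 1 β l 0) ∧
    (∑' l : ℕ, u ^ l * Z 1 β l 0)
      = 2 * β / (β * (1 + Real.sqrt (1 - 4 * u)) - 2 * u) := by
  obtain ⟨hβ0, hβ1⟩ := hβ
  have hu4 : u ≤ 1 / 4 := by
    rcases le_or_gt β (1 / 2) with h | h
    · nlinarith [hsmall h]
    · exact hlarge h
  obtain ⟨c, hc⟩ : ∃ c, Real.sqrt (1 - 4 * u) = 1 - 2 * c :=
    ⟨(1 - Real.sqrt (1 - 4 * u)) / 2, by ring⟩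
  have hs2 : (1 - 2 * c) ^ 2 = 1 - 4 * u := hc ▸ Real.sq_sqrt (by linarith)
  have hc2 : c ≤ 1 / 2 := by linarith [hc ▸ Real.sqrt_nonneg (1 - 4 * u)]
  have hcu : c * (1 - c) = u := by linear_combination (-1 / 4) * hs2
  have hc0 : 0 ≤ c := by nlinarith
  have hcβ : c < β := by
    rcases le_or_gt β (1 / 2) with h | h
    · by_contra! hβc
      nlinarith [hsmall h]
    · linarith
  have h := hasSum_Z_one hβ0 hβ1 hc0 hc2 hcβ
  rw [hcu] at h
  refine ⟨h.summable, h.tsum_eq.trans ?_⟩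
  rw [hc, ← hcu,
    show β * (1 + (1 - 2 * c)) - 2 * (c * (1 - c)) = 2 * ((1 - c) * (β - c)) by ring,
    mul_div_mul_left _ _ two_ne_zero]

end TASEP
end
end
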